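/- arXiv:math/0211082 — 2 statements merged into one kernel-verified Lean document; each statement's English description precedes it below -/
import Mathlib

section
/- On ℂⁿ⊗ℂⁿ⊗ℂⁿ⊗ℂⁿ one has Q₁₂ · R₁₄ = Q₁₂ · 'R₂₄, where 'R is R transposed in the first tensor factor. -/
open Matrix Kronecker BigOperators

noncomputable section

/-- Standard matrix units `E i j` in `End(ℂⁿ)`. -/
def E (n : ℕ) (i j : Fin n) : Matrix (Fin n) (Fin n) ℂ :=
  Matrix.single i j 1

/-- The R-matrix `R = q Σ Eii⊗Eii + Σ_{i≠j} Eii⊗Ejj + (q-q⁻¹) Σ_{i<j} Eij⊗Eji`. -/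
def Rm (n : ℕ) (q : ℂ) : Matrix (Fin n × Fin n) (Fin n × Fin n) ℂ :=
  q • (∑ i, E n i i ⊗ₖ E n i i)
    + ∑ i, ∑ j, (if i ≠ j then E n i i ⊗ₖ E n j j else 0)
    + (q - q⁻¹) • ∑ i, ∑ j, (if i < j then E n i j ⊗ₖ E n j i else 0)

/-- The R-matrix `R̃`. -/
def Rt (n : ℕ) (q : ℂ) : Matrix (Fin n × Fin n) (Fin n × Fin n) ℂ :=
  q⁻¹ • (∑ i, E n i i ⊗ₖ E n i i)
    + ∑ i, ∑ j, (if i ≠ j then E n i i ⊗ₖ E n j j else 0)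
    + (q⁻¹ - q) • ∑ i, ∑ j, (if j < i then E n i j ⊗ₖ E n j i else 0)

/-- The permutation operator `P = Σ Eij⊗Eji`. -/
def Pm (n : ℕ) : Matrix (Fin n × Fin n) (Fin n × Fin n) ℂ :=
  ∑ i, ∑ j, E n i j ⊗ₖ E n j i

/-- `Ř = P R`. -/
def Rc (n : ℕ) (q : ℂ) : Matrix (Fin n × Fin n) (Fin n × Fin n) ℂ :=
  Pm n * Rm n q

/-- `Q = Σ_{i,j} q^{n-2i+1} Eij⊗Eij` (indices `i,j ∈ {1,…,n}`). -/
def Qm (n : ℕ) (q : ℂ) : Matrix (Fin n × Fin n) (Fin n × Fin n) ℂ :=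
  ∑ i : Fin n, ∑ j : Fin n,
    (q ^ ((n : ℤ) - 2 * (((i : ℕ) : ℤ) + 1) + 1)) • (E n i j ⊗ₖ E n i j)

/-- `Q̄ = Σ_{i,j} Eij⊗Eij`. -/
def Qb (n : ℕ) : Matrix (Fin n × Fin n) (Fin n × Fin n) ℂ :=
  ∑ i, ∑ j, E n i j ⊗ₖ E n i j

/-- Partial transpose in the first tensor factor: `'X`. -/
def pT (n : ℕ) (X : Matrix (Fin n × Fin n) (Fin n × Fin n) ℂ) :
    Matrix (Fin n × Fin n) (Fin n × Fin n) ℂ :=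
  Matrix.of fun p r => X (r.1, p.2) (p.1, r.2)

/-- Partial transpose in the second tensor factor: `X′`. -/
def sT (n : ℕ) (X : Matrix (Fin n × Fin n) (Fin n × Fin n) ℂ) :
    Matrix (Fin n × Fin n) (Fin n × Fin n) ℂ :=
  Matrix.of fun p r => X (p.1, r.2) (r.1, p.2)

/-- Embeddings of operators on `ℂⁿ⊗ℂⁿ` into the four-fold tensor product `(ℂⁿ)^{⊗4}`. -/
def M12 (n : ℕ) (X : Matrix (Fin n × Fin n) (Fin n × Fin n) ℂ) :
    Matrix (Fin n × Fin n × Fin n × Fin n) (Fin n × Fin n × Fin n × Fin n) ℂ :=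
  Matrix.of fun p r =>
    X (p.1, p.2.1) (r.1, r.2.1) * (if p.2.2 = r.2.2 then 1 else 0)

def M13 (n : ℕ) (X : Matrix (Fin n × Fin n) (Fin n × Fin n) ℂ) :
    Matrix (Fin n × Fin n × Fin n × Fin n) (Fin n × Fin n × Fin n × Fin n) ℂ :=
  Matrix.of fun p r =>
    X (p.1, p.2.2.1) (r.1, r.2.2.1) * (if p.2.1 = r.2.1 then 1 else 0)
      * (if p.2.2.2 = r.2.2.2 then 1 else 0)

def M14 (n : ℕ) (X : Matrix (Fin n × Fin n) (Fin n × Fin n) ℂ) :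
    Matrix (Fin n × Fin n × Fin n × Fin n) (Fin n × Fin n × Fin n × Fin n) ℂ :=
  Matrix.of fun p r =>
    X (p.1, p.2.2.2) (r.1, r.2.2.2) * (if p.2.1 = r.2.1 then 1 else 0)
      * (if p.2.2.1 = r.2.2.1 then 1 else 0)

def M23 (n : ℕ) (X : Matrix (Fin n × Fin n) (Fin n × Fin n) ℂ) :
    Matrix (Fin n × Fin n × Fin n × Fin n) (Fin n × Fin n × Fin n × Fin n) ℂ :=
  Matrix.of fun p r =>
    X (p.2.1, p.2.2.1) (r.2.1, r.2.2.1) * (if p.1 = r.1 then 1 else 0)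
      * (if p.2.2.2 = r.2.2.2 then 1 else 0)

def M24 (n : ℕ) (X : Matrix (Fin n × Fin n) (Fin n × Fin n) ℂ) :
    Matrix (Fin n × Fin n × Fin n × Fin n) (Fin n × Fin n × Fin n × Fin n) ℂ :=
  Matrix.of fun p r =>
    X (p.2.1, p.2.2.2) (r.2.1, r.2.2.2) * (if p.1 = r.1 then 1 else 0)
      * (if p.2.2.1 = r.2.2.1 then 1 else 0)

def M34 (n : ℕ) (X : Matrix (Fin n × Fin n) (Fin n × Fin n) ℂ) :
    Matrix (Fin n × Fin n × Fin n × Fin n) (Fin n × Fin n × Fin n × Fin n) ℂ :=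
  Matrix.of fun p r =>
    X p.2.2 r.2.2 * (if p.1 = r.1 then 1 else 0) * (if p.2.1 = r.2.1 then 1 else 0)


lemma Qm_apply (n : ℕ) (q : ℂ) (a b c d : Fin n) :
    Qm n q (a,b) (c,d) =
      if b = a ∧ d = c then q ^ ((n : ℤ) - 2 * (((a : ℕ) : ℤ) + 1) + 1) else 0 := by
  simp only [Qm, Matrix.sum_apply, Matrix.smul_apply, Matrix.kroneckerMap_apply, E,
    Matrix.single, Matrix.of_apply, smul_eq_mul, mul_ite, mul_one, mul_zero,
    ite_and]
  rw [Finset.sum_comm]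
  simp only [Finset.sum_ite_eq', Finset.mem_univ, if_true]
  split_ifs with h1 h2 <;> simp_all

/-- `Q₁₂ R₁₄ = Q₁₂ 'R₂₄` on `(ℂⁿ)^{⊗4}`. -/
theorem Q12_R14 (n : ℕ) (hn : 1 ≤ n) (q : ℂ) (hq : q ≠ 0) :
    M12 n (Qm n q) * M14 n (Rm n q) = M12 n (Qm n q) * M24 n (pT n (Rm n q)) := by
  ext ⟨p1, p2, p3, p4⟩ ⟨r1, r2, r3, r4⟩
  rw [Matrix.mul_apply, Matrix.mul_apply]
  simp only [M12, M14, M24, pT, Matrix.of_apply, Fintype.sum_prod_type, Qm_apply,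
    ite_mul, mul_ite, zero_mul, mul_zero, mul_one, one_mul, ite_and, Prod.mk.injEq]
  simp only [Finset.sum_ite_eq', Finset.sum_ite_eq, Finset.mem_univ, if_true,
    Finset.sum_ite_irrel, Finset.sum_const_zero]
end
end

section
/- One has the identity 'R · R · D₂ · R′ = R · D₂ + q^{n+1}(q − q⁻¹)·Q̄ in End(ℂⁿ⊗ℂⁿ), where R′ denotes R transposed in the second tensor factor, 'R denotes R transposed in the first tensor factor, D₂ = 1⊗D with D = Σ_i q^{n−2i+1}E_ii, and Q̄ = Σ_{i,j} E_ij⊗E_ij. -/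
open Matrix Kronecker BigOperators

noncomputable section

/-- The diagonal matrix `D = Σ q^{n-2i+1} E_ii`. -/
def Dm (n : ℕ) (q : ℂ) : Matrix (Fin n) (Fin n) ℂ :=
  ∑ i : Fin n, (q ^ ((n : ℤ) - 2 * (((i : ℕ) : ℤ) + 1) + 1)) • E n i i

-- ===================== auxiliary machinery =====================

set_option maxHeartbeats 2000000 in
lemma Rm_apply (n : ℕ) (q : ℂ) (a b c d : Fin n) :
    Rm n q (a, b) (c, d) =
      (if a = c ∧ b = d then (if a = b then q else 1) else 0)
      + (if a = d ∧ b = c ∧ a < b then q - q⁻¹ else 0) := by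
  have h : ∀ (X Y : Matrix (Fin n × Fin n) (Fin n × Fin n) ℂ) (P : Prop) [Decidable P],
      (if P then X else Y) (a,b) (c,d) = if P then X (a,b) (c,d) else Y (a,b) (c,d) := by
    intro X Y P _; split <;> rfl
  simp only [Rm, E, Matrix.add_apply, Matrix.smul_apply, Matrix.sum_apply, h,
    Matrix.kroneckerMap_apply, Matrix.single, Matrix.of_apply,
    Matrix.zero_apply, smul_eq_mul, mul_ite, mul_one, mul_zero, ite_mul, one_mul, zero_mul]
  simp only [ite_and, Finset.sum_ite_eq, Finset.sum_ite_eq', Finset.mem_univ, if_true]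
  have e1 : ∑ x : Fin n, ∑ x1 : Fin n,
      (if x ≠ x1 then if x1 = b then if x1 = d then if x = a then if x = c then (1:ℂ) else 0 else 0 else 0 else 0 else 0)
      = if a ≠ b then if b = d then if a = c then 1 else 0 else 0 else 0 := by
    rw [Finset.sum_eq_single a]
    · rw [Finset.sum_eq_single b]
      · split_ifs <;> simp_all
      · intro x1 _ hx1; split_ifs <;> simp_all
      · simp
    · intro x _ hx; apply Finset.sum_eq_zero; intro x1 _; split_ifs <;> simp_all
    · simp
  have e2 : ∑ x : Fin n, ∑ x1 : Fin n,
      (if x < x1 then if x1 = b then if x = d then if x = a then if x1 = c then (1:ℂ) else 0 else 0 else 0 else 0 else 0)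
      = if a < b then if a = d then if b = c then 1 else 0 else 0 else 0 := by
    rw [Finset.sum_eq_single a]
    · rw [Finset.sum_eq_single b]
      · split_ifs <;> simp_all
      · intro x1 _ hx1; split_ifs <;> simp_all
      · simp
    · intro x _ hx; apply Finset.sum_eq_zero; intro x1 _; split_ifs <;> simp_all
    · simp
  rw [e1, e2]
  clear h e1 e2
  split_ifs <;> simp_all

lemma dsum1 {α : Type*} [Fintype α] [DecidableEq α] (a b : α) (c : ℂ) :
    ∑ s : α, ∑ t : α, (if s = a ∧ t = b then c else 0) = c := by
  simp [ite_and, Finset.sum_ite_eq', Finset.mem_univ]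

lemma dsum2 {α : Type*} [Fintype α] [DecidableEq α] (a b : α) (P : Prop) [Decidable P] (c : ℂ) :
    ∑ s : α, ∑ t : α, (if s = a ∧ t = b ∧ P then c else 0) = if P then c else 0 := by
  simp [ite_and, Finset.sum_ite_eq', Finset.mem_univ]

lemma dsum3 {α : Type*} [Fintype α] [DecidableEq α] (P : α → Prop) [DecidablePred P]
    (f : α → ℂ) :
    ∑ s : α, ∑ t : α, (if s = t ∧ P t then f t else 0) = ∑ t : α, (if P t then f t else 0) := by
  rw [Finset.sum_comm]
  apply Finset.sum_congr rfl
  intro t _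
  simp [ite_and, Finset.sum_ite_eq', Finset.mem_univ]

set_option maxHeartbeats 2000000 in
set_option maxRecDepth 20000 in
lemma M_apply (n : ℕ) (q : ℂ) (a b u v : Fin n) :
    (pT n (Rm n q) * Rm n q) (a, b) (u, v) =
      (if a = u ∧ b = v then (if a = b then q ^ 2 else 1) else 0)
      + (if a = v ∧ b = u ∧ a < b then q - q⁻¹ else 0)
      + (if u = v ∧ a = b ∧ u < a then q * (q - q⁻¹) else 0) := by
  rw [Matrix.mul_apply, Fintype.sum_prod_type]
  have key : ∀ s t : Fin n,
      pT n (Rm n q) (a, b) (s, t) * Rm n q (s, t) (u, v)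
      = (if s = a ∧ t = b then
          ((if a = u ∧ b = v then (if a = b then q ^ 2 else 1) else 0)
            + (if a = v ∧ b = u ∧ a < b then q - q⁻¹ else 0)) else 0)
        + (if s = u ∧ t = u ∧ (u = v ∧ a = b ∧ u < a) then q * (q - q⁻¹) else 0) := by
    intro s t
    show Rm n q (s, b) (a, t) * Rm n q (s, t) (u, v) = _
    rw [Rm_apply, Rm_apply]
    simp only [Fin.ext_iff, Fin.lt_def]
    split_ifs <;> first | ring1 | (exfalso; omega)
  calc ∑ s : Fin n, ∑ t : Fin n, pT n (Rm n q) (a, b) (s, t) * Rm n q (s, t) (u, v)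
      = ∑ s : Fin n, ∑ t : Fin n,
        ((if s = a ∧ t = b then
          ((if a = u ∧ b = v then (if a = b then q ^ 2 else 1) else 0)
            + (if a = v ∧ b = u ∧ a < b then q - q⁻¹ else 0)) else 0)
        + (if s = u ∧ t = u ∧ (u = v ∧ a = b ∧ u < a) then q * (q - q⁻¹) else 0)) :=
        Finset.sum_congr rfl fun s _ => Finset.sum_congr rfl fun t _ => key s t
    _ = _ := by
        simp only [Finset.sum_add_distrib, dsum1, dsum2]

def dd (n : ℕ) (q : ℂ) (i : Fin n) : ℂ := q ^ ((n : ℤ) - 2 * ((i : ℕ) : ℤ) - 1)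

lemma Dm_eq (n : ℕ) (q : ℂ) : Dm n q = Matrix.diagonal (dd n q) := by
  ext i j
  simp only [Dm, E, Matrix.sum_apply, Matrix.smul_apply, Matrix.single,
    Matrix.of_apply, Matrix.diagonal_apply, smul_eq_mul, mul_ite, mul_one, mul_zero, ite_and]
  rw [Finset.sum_ite_eq']
  simp only [Finset.mem_univ, if_true]
  split_ifs with h1 h2 <;> try simp_all
  · simp [dd]; congr 1; ring

lemma K_eq (n : ℕ) (q : ℂ) :
    (1 : Matrix (Fin n) (Fin n) ℂ) ⊗ₖ Dm n q
      = Matrix.diagonal (fun p : Fin n × Fin n => dd n q p.2) := by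
  rw [Dm_eq, ← Matrix.diagonal_one, Matrix.diagonal_kronecker_diagonal]
  simp

lemma Qb_apply (n : ℕ) (a b c d : Fin n) :
    Qb n (a, b) (c, d) = if a = b ∧ c = d then 1 else 0 := by
  simp only [Qb, E, Matrix.sum_apply, Matrix.kroneckerMap_apply, Matrix.single,
    Matrix.of_apply, mul_ite, mul_one, mul_zero, ite_and]
  rw [Finset.sum_comm]
  rw [Finset.sum_eq_single c]
  · rw [Finset.sum_eq_single a]
    · split_ifs <;> simp_all
    · intro x _ hx; split_ifs <;> simp_all
    · simp
  · intro x _ hx; apply Finset.sum_eq_zero; intro y _; split_ifs <;> simp_all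
  · simp

lemma geo (n : ℕ) (q : ℂ) (hq : q ≠ 0) (m : ℕ) :
    (q - q⁻¹) * ∑ k ∈ Finset.range m, q ^ ((n:ℤ) - 2*(k:ℤ) - 1)
      = q ^ (n:ℤ) - q ^ ((n:ℤ) - 2*(m:ℤ)) := by
  induction m with
  | zero => simp
  | succ m ih =>
    rw [Finset.sum_range_succ, mul_add, ih]
    have h1 : q * q ^ ((n:ℤ) - 2*(m:ℤ) - 1) = q ^ ((n:ℤ) - 2*(m:ℤ)) := by
      rw [show (n:ℤ) - 2*(m:ℤ) = ((n:ℤ) - 2*(m:ℤ) - 1) + 1 by ring, zpow_add_one₀ hq]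
      ring
    have h2 : q⁻¹ * q ^ ((n:ℤ) - 2*(m:ℤ) - 1) = q ^ ((n:ℤ) - 2*((m:ℤ)+1)) := by
      rw [show (n:ℤ) - 2*((m:ℤ)+1) = ((n:ℤ) - 2*(m:ℤ) - 1) + (-1) by ring,
        zpow_add₀ hq, _root_.zpow_neg_one]
      ring
    push_cast
    rw [sub_mul, h1, h2]
    ring

lemma sum_geo_fin (n : ℕ) (q : ℂ) (hq : q ≠ 0) (m : Fin n) :
    (q - q⁻¹) * ∑ v : Fin n, (if v < m then dd n q v else 0)
      = q ^ (n:ℤ) - q * dd n q m := by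
  have h1 : ∑ v : Fin n, (if v < m then dd n q v else 0)
      = ∑ k ∈ Finset.range (m : ℕ), q ^ ((n:ℤ) - 2*(k:ℤ) - 1) := by
    have h2 : ∑ v : Fin n, (if v < m then dd n q v else 0)
        = ∑ k ∈ Finset.range n,
            (fun k : ℕ => if k < (m:ℕ) then q ^ ((n:ℤ) - 2*(k:ℤ) - 1) else 0) k := by
      rw [← Fin.sum_univ_eq_sum_range]
      apply Finset.sum_congr rfl
      intro v _
      simp only [Fin.lt_def, dd]
    rw [h2]
    rw [← Finset.sum_subset (Finset.range_subset_range.2 m.2.le)]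
    · apply Finset.sum_congr rfl
      intro k hk
      simp [Finset.mem_range.1 hk]
    · intro k _ hk
      simp only [Finset.mem_range, not_lt] at hk
      simp [not_lt.2 hk]
  rw [h1, geo n q hq]
  have h3 : q ^ ((n:ℤ) - 2*((m:ℕ):ℤ)) = q * dd n q m := by
    rw [dd, show (n:ℤ) - 2*((m:ℕ):ℤ) = ((n:ℤ) - 2*((m:ℕ):ℤ) - 1) + 1 by ring,
      zpow_add_one₀ hq]
    ring
  rw [h3]

-- ===================== end auxiliary machinery =====================

set_option maxHeartbeats 1000000 in
lemma A1L (n : ℕ) (q : ℂ) (a b c d u v : Fin n) :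
    (if a = u ∧ b = v then (if a = b then q ^ 2 else 1) else 0) * dd n q v *
        ((if u = c ∧ d = v then (if u = d then q else 1) else 0)
          + (if u = v ∧ d = c ∧ u < d then q - q⁻¹ else 0))
        = (if u = a ∧ v = b then
            (if a = b then q ^ 2 else 1) * dd n q b *
              ((if a = c ∧ d = b then (if a = d then q else 1) else 0)
                + (if a = b ∧ d = c ∧ a < d then q - q⁻¹ else 0)) else 0) := by
  by_cases hu : u = a
  · rw [hu]
    by_cases hv : v = b
    · rw [hv]; simp
    · have c1 : ¬(a = a ∧ b = v) := fun h => hv h.2.symm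
      have c2 : ¬(a = a ∧ v = b) := fun h => hv h.2
      rw [if_neg c1, if_neg c2]; ring1
  · have c1 : ¬(a = u ∧ b = v) := fun h => hu h.1.symm
    have c2 : ¬(u = a ∧ v = b) := fun h => hu h.1
    rw [if_neg c1, if_neg c2]; ring1

set_option maxHeartbeats 1000000 in
lemma A2L (n : ℕ) (q : ℂ) (a b c d u v : Fin n) :
    (if a = v ∧ b = u ∧ a < b then q - q⁻¹ else 0) * dd n q v *
        ((if u = c ∧ d = v then (if u = d then q else 1) else 0)
          + (if u = v ∧ d = c ∧ u < d then q - q⁻¹ else 0))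
        = (if u = b ∧ v = a ∧ (a < b ∧ b = c ∧ d = a) then (q - q⁻¹) * dd n q a else 0) := by
  by_cases h : a = v ∧ b = u ∧ a < b
  · obtain ⟨h1, h2, h3⟩ := h
    rw [← h1, ← h2]
    rw [if_pos ⟨rfl, rfl, h3⟩,
      if_neg (fun hh : b = a ∧ d = c ∧ b < d => absurd h3 (by rw [hh.1]; exact lt_irrefl a)),
      add_zero]
    by_cases h4 : b = c ∧ d = a
    · rw [← h4.1, h4.2]
      rw [if_pos ⟨rfl, rfl⟩,
        if_neg (fun hh : b = a => absurd h3 (by rw [hh]; exact lt_irrefl a)),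
        if_pos ⟨rfl, rfl, h3, rfl, rfl⟩]
      ring1
    · rw [if_neg h4,
        if_neg (fun hh : b = b ∧ a = a ∧ a < b ∧ b = c ∧ d = a =>
          h4 ⟨hh.2.2.2.1, hh.2.2.2.2⟩)]
      ring1
  · rw [if_neg h, if_neg (fun hh : u = b ∧ v = a ∧ a < b ∧ b = c ∧ d = a =>
      h ⟨hh.2.1.symm, hh.1.symm, hh.2.2.1⟩)]
    ring1

set_option maxHeartbeats 1000000 in
lemma A3L (n : ℕ) (q : ℂ) (a b c d u v : Fin n) :
    (if u = v ∧ a = b ∧ u < a then q * (q - q⁻¹) else 0) * dd n q v *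
        ((if u = c ∧ d = v then (if u = d then q else 1) else 0)
          + (if u = v ∧ d = c ∧ u < d then q - q⁻¹ else 0))
        = (if u = c ∧ v = c ∧ (a = b ∧ d = c ∧ c < a) then q ^ 2 * (q - q⁻¹) * dd n q c else 0)
          + (if u = v ∧ (a = b ∧ d = c ∧ v < a ∧ v < d) then q * (q - q⁻¹) ^ 2 * dd n q v
              else 0) := by
  by_cases h : u = v ∧ a = b ∧ u < a
  · obtain ⟨h1, h2, h3⟩ := h
    rw [← h1, ← h2]
    rw [if_pos ⟨rfl, rfl, h3⟩]
    by_cases hc : u = c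
    · rw [← hc]
      by_cases hd : d = u
      · rw [hd]
        rw [if_pos ⟨rfl, rfl⟩, if_pos rfl,
          if_neg (fun hh : u = u ∧ u = u ∧ u < u => lt_irrefl u hh.2.2),
          if_pos ⟨rfl, rfl, rfl, rfl, h3⟩,
          if_neg (fun hh : u = u ∧ a = a ∧ u = u ∧ u < a ∧ u < u => lt_irrefl u hh.2.2.2.2)]
        ring1
      · rw [if_neg (fun hh : u = u ∧ d = u => hd hh.2),
          if_neg (fun hh : u = u ∧ d = u ∧ u < d => hd hh.2.1),
          if_neg (fun hh : u = u ∧ u = u ∧ a = a ∧ d = u ∧ u < a => hd hh.2.2.2.1),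
          if_neg (fun hh : u = u ∧ a = a ∧ d = u ∧ u < a ∧ u < d => hd hh.2.2.1)]
        ring1
    · rw [if_neg (fun hh : u = c ∧ d = u => hc hh.1),
        if_neg (fun hh : u = c ∧ u = c ∧ a = a ∧ d = c ∧ c < a => hc hh.1)]
      by_cases hdc : d = c ∧ u < d
      · rw [if_pos ⟨rfl, hdc.1, hdc.2⟩, if_pos ⟨rfl, rfl, hdc.1, h3, hdc.2⟩]; ring1
      · rw [if_neg (fun hh : u = u ∧ d = c ∧ u < d => hdc ⟨hh.2.1, hh.2.2⟩),
          if_neg (fun hh : u = u ∧ a = a ∧ d = c ∧ u < a ∧ u < d =>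
            hdc ⟨hh.2.2.1, hh.2.2.2.2⟩)]
        ring1
  · rw [if_neg h,
      if_neg (fun hh : u = c ∧ v = c ∧ a = b ∧ d = c ∧ c < a =>
        h ⟨hh.1.trans hh.2.1.symm, hh.2.2.1, by rw [hh.1]; exact hh.2.2.2.2⟩),
      if_neg (fun hh : u = v ∧ a = b ∧ d = c ∧ v < a ∧ v < d =>
        h ⟨hh.1, hh.2.1, by rw [hh.1]; exact hh.2.2.2.1⟩)]
    ring1

set_option maxHeartbeats 1000000 in
lemma stepL (n : ℕ) (q : ℂ) (a b c d u v : Fin n) :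
    (pT n (Rm n q) * Rm n q) (a, b) (u, v) * dd n q v * sT n (Rm n q) (u, v) (c, d)
      = (if u = a ∧ v = b then
            (if a = b then q ^ 2 else 1) * dd n q b *
              ((if a = c ∧ d = b then (if a = d then q else 1) else 0)
                + (if a = b ∧ d = c ∧ a < d then q - q⁻¹ else 0)) else 0)
        + (if u = b ∧ v = a ∧ (a < b ∧ b = c ∧ d = a) then (q - q⁻¹) * dd n q a else 0)
        + ((if u = c ∧ v = c ∧ (a = b ∧ d = c ∧ c < a) then q ^ 2 * (q - q⁻¹) * dd n q c else 0)
          + (if u = v ∧ (a = b ∧ d = c ∧ v < a ∧ v < d) then q * (q - q⁻¹) ^ 2 * dd n q v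
              else 0)) := by
  have hsT : sT n (Rm n q) (u, v) (c, d) = Rm n q (u, d) (c, v) := rfl
  rw [hsT, M_apply, Rm_apply]
  have expand : ∀ x1 x2 x3 dl s : ℂ,
      (x1 + x2 + x3) * dl * s = x1 * dl * s + x2 * dl * s + x3 * dl * s := by
    intros; ring
  rw [expand, A1L, A2L, A3L]

lemma pull_sum (n : ℕ) (q : ℂ) (m : Fin n) (K : ℂ) :
    ∑ v : Fin n, (if v < m then K * dd n q v else 0)
      = K * ∑ v : Fin n, (if v < m then dd n q v else 0) := by
  rw [Finset.mul_sum]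
  apply Finset.sum_congr rfl
  intro v _
  split_ifs <;> simp

set_option maxHeartbeats 2000000 in
/-- `'R · R · D₂ · R′ = R · D₂ + q^{n+1}(q-q⁻¹) Q̄`. -/
theorem RRDR (n : ℕ) (hn : 1 ≤ n) (q : ℂ) (hq : q ≠ 0) :
    pT n (Rm n q) * Rm n q * ((1 : Matrix (Fin n) (Fin n) ℂ) ⊗ₖ Dm n q)
        * sT n (Rm n q)
      = Rm n q * ((1 : Matrix (Fin n) (Fin n) ℂ) ⊗ₖ Dm n q)
        + (q ^ ((n : ℤ) + 1) * (q - q⁻¹)) • Qb n := by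
  have hqq : q * q⁻¹ = 1 := mul_inv_cancel₀ hq
  rw [K_eq]
  ext ⟨a, b⟩ ⟨c, d⟩
  rw [Matrix.mul_apply, Fintype.sum_prod_type]
  simp only [Matrix.mul_diagonal, Matrix.add_apply, Matrix.smul_apply, Qb_apply, smul_eq_mul]
  rw [Finset.sum_congr rfl fun u _ => Finset.sum_congr rfl fun v _ => stepL n q a b c d u v]
  simp only [Finset.sum_add_distrib, dsum1, dsum2, dsum3]
  rw [Rm_apply]
  by_cases hab : a = b
  · rw [← hab]
    by_cases hdc : d = c
    · rw [hdc]
      have hq1 : q ^ ((n:ℤ) + 1) = q * q ^ (n:ℤ) := by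
        rw [zpow_add_one₀ hq]; ring
      rcases lt_trichotomy a c with h | h | h
      · -- a < c
        have hF : ∀ t : Fin n,
            (if a = a ∧ c = c ∧ t < a ∧ t < c then q * (q - q⁻¹) ^ 2 * dd n q t else 0)
            = (if t < a then q * (q - q⁻¹) ^ 2 * dd n q t else 0) := by
          intro t
          by_cases ht : t < a
          · rw [if_pos ⟨rfl, rfl, ht, ht.trans h⟩, if_pos ht]
          · rw [if_neg (fun hh => ht hh.2.2.1), if_neg ht]
        rw [Finset.sum_congr rfl fun t _ => hF t, pull_sum]
        have hg := sum_geo_fin n q hq a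
        rw [hq1]
        have h' : (a:ℕ) < (c:ℕ) := h
        simp only [Fin.ext_iff, Fin.lt_def, eq_self_iff_true, true_and, and_true,
          lt_self_iff_false, false_and, and_false, if_true, if_false] at hg ⊢
        split_ifs <;> first
          | linear_combination (q * (q - q⁻¹)) * hg
          | (exfalso; omega)
      · -- a = c
        rw [← h]
        have hF : ∀ t : Fin n,
            (if a = a ∧ a = a ∧ t < a ∧ t < a then q * (q - q⁻¹) ^ 2 * dd n q t else 0)
            = (if t < a then q * (q - q⁻¹) ^ 2 * dd n q t else 0) := by
          intro t
          by_cases ht : t < a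
          · rw [if_pos ⟨rfl, rfl, ht, ht⟩, if_pos ht]
          · rw [if_neg (fun hh => ht hh.2.2.1), if_neg ht]
        rw [Finset.sum_congr rfl fun t _ => hF t, pull_sum]
        have hg := sum_geo_fin n q hq a
        rw [hq1]
        simp only [Fin.ext_iff, Fin.lt_def, eq_self_iff_true, true_and, and_true,
          lt_self_iff_false, false_and, and_false, if_true, if_false] at hg ⊢
        linear_combination (q * (q - q⁻¹)) * hg + (q * dd n q a) * hqq
      · -- c < a
        have hF : ∀ t : Fin n,
            (if a = a ∧ c = c ∧ t < a ∧ t < c then q * (q - q⁻¹) ^ 2 * dd n q t else 0)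
            = (if t < c then q * (q - q⁻¹) ^ 2 * dd n q t else 0) := by
          intro t
          by_cases ht : t < c
          · rw [if_pos ⟨rfl, rfl, ht.trans h, ht⟩, if_pos ht]
          · rw [if_neg (fun hh => ht hh.2.2.2), if_neg ht]
        rw [Finset.sum_congr rfl fun t _ => hF t, pull_sum]
        have hg := sum_geo_fin n q hq c
        rw [hq1]
        have h' : (c:ℕ) < (a:ℕ) := h
        simp only [Fin.ext_iff, Fin.lt_def, eq_self_iff_true, true_and, and_true,
          lt_self_iff_false, false_and, and_false, if_true, if_false] at hg ⊢
        split_ifs <;> first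
          | linear_combination (q * (q - q⁻¹)) * hg
          | (exfalso; omega)
    · -- d ≠ c
      have hz : ∀ t : Fin n,
          (if a = a ∧ d = c ∧ t < a ∧ t < d then q * (q - q⁻¹) ^ 2 * dd n q t else 0) = 0 :=
        fun t => if_neg fun hh => hdc hh.2.1
      rw [Finset.sum_congr rfl fun t _ => hz t, Finset.sum_const_zero]
      have hdc' : ¬ (d:ℕ) = (c:ℕ) := fun hh => hdc (Fin.ext hh)
      simp only [Fin.ext_iff, Fin.lt_def, eq_self_iff_true, true_and, and_true,
          lt_self_iff_false, false_and, and_false, if_true, if_false]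
      split_ifs <;> first | ring1 | (exfalso; omega)
  · -- a ≠ b
    have hz : ∀ t : Fin n,
        (if a = b ∧ d = c ∧ t < a ∧ t < d then q * (q - q⁻¹) ^ 2 * dd n q t else 0) = 0 :=
      fun t => if_neg fun hh => hab hh.1
    rw [Finset.sum_congr rfl fun t _ => hz t, Finset.sum_const_zero]
    rw [if_neg hab, if_neg hab,
      if_neg (fun hh : a = b ∧ d = c ∧ a < d => hab hh.1),
      if_neg (fun hh : a = b ∧ d = c ∧ c < a => hab hh.1),
      if_neg (fun hh : a = b ∧ c = d => hab hh.1)]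
    have hab' : ¬ (a:ℕ) = (b:ℕ) := fun hh => hab (Fin.ext hh)
    by_cases h1 : a = c ∧ d = b
    · rw [← h1.1, h1.2]
      simp only [Fin.ext_iff, Fin.lt_def, eq_self_iff_true, true_and, and_true,
          lt_self_iff_false, false_and, and_false, if_true, if_false]
      split_ifs <;> first | ring1 | (exfalso; omega)
    · rw [if_neg h1]
      by_cases h2 : a < b ∧ b = c ∧ d = a
      · obtain ⟨hlt, h2b, h2c⟩ := h2
        rw [← h2b, h2c]
        have hlt' : (a:ℕ) < (b:ℕ) := hlt
        simp only [Fin.ext_iff, Fin.lt_def, eq_self_iff_true, true_and, and_true,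
          lt_self_iff_false, false_and, and_false, if_true, if_false]
        split_ifs <;> first | ring1 | (exfalso; omega)
      · rw [if_neg h2,
          if_neg (fun hh : a = d ∧ b = c ∧ a < b => h2 ⟨hh.2.2, hh.2.1, hh.1.symm⟩),
          if_neg (fun hh : a = c ∧ b = d => h1 ⟨hh.1, hh.2.symm⟩)]
        ring1
end
end
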